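/- arXiv:1912.13438 — 8 statements merged into one kernel-verified Lean document; each statement's English description precedes it below -/
import Mathlib

section
/- For two fractions p/q and r/s in lowest terms with qr - ps = 1, the Ford circles C[p/q] and C[r/s] (the circle of radius 1/(2q²) centered at (p/q, 1/(2q²)) and the circle of radius 1/(2s²) centered at (r/s, 1/(2s²))) are externally tangent. -/
/-! Both Ford circles touch the real axis, so two of them with tangency points `x₁, x₂` and radii
`ρ₁, ρ₂` are externally tangent exactly when `(x₁ - x₂)² + (ρ₁ - ρ₂)² = (ρ₁ + ρ₂)²`, i.e. when
`(x₁ - x₂)² = 4 ρ₁ ρ₂`. For Farey neighbours `p/q - r/s = -1/(qs)`, and both sides equal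
`1/(qs)²`. -/

open Complex

theorem dist_add_mul_I_eq_add_of_sq_sub_eq {x₁ x₂ ρ₁ ρ₂ : ℝ} (hρ₁ : 0 ≤ ρ₁) (hρ₂ : 0 ≤ ρ₂)
    (h : (x₁ - x₂) ^ 2 = 4 * ρ₁ * ρ₂) :
    dist ((x₁ : ℂ) + ρ₁ * I) (x₂ + ρ₂ * I) = ρ₁ + ρ₂ := by
  have hsub : ((x₁ : ℂ) + ρ₁ * I) - (x₂ + ρ₂ * I)
      = ((x₁ - x₂ : ℝ) : ℂ) + ((ρ₁ - ρ₂ : ℝ) : ℂ) * I := by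
    push_cast; ring
  rw [Complex.dist_eq, hsub, Complex.norm_def, Complex.normSq_add_mul_I, h,
    show 4 * ρ₁ * ρ₂ + (ρ₁ - ρ₂) ^ 2 = (ρ₁ + ρ₂) ^ 2 by ring]
  exact Real.sqrt_sq (add_nonneg hρ₁ hρ₂)

theorem sq_div_sub_div_eq_four_mul_of_det_eq_one {p q r s : ℝ} (hq : q ≠ 0) (hs : s ≠ 0)
    (hdet : q * r - p * s = 1) :
    (p / q - r / s) ^ 2 = 4 * (1 / (2 * q ^ 2)) * (1 / (2 * s ^ 2)) := by
  rw [div_sub_div _ _ hq hs, show p * s - q * r = -1 by linarith]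
  field_simp
  ring

theorem ford_circles_externally_tangent_general (p q r s : ℤ)
    (hq : 0 < q) (hs : 0 < s)
    (hdet : q * r - p * s = 1) :
    dist ((p : ℂ) / q + (1 / (2 * (q : ℂ) ^ 2)) * Complex.I)
        ((r : ℂ) / s + (1 / (2 * (s : ℂ) ^ 2)) * Complex.I)
      = 1 / (2 * (q : ℝ) ^ 2) + 1 / (2 * (s : ℝ) ^ 2) := by
  have hdetR : (q : ℝ) * r - p * s = 1 := by exact_mod_cast hdet
  have key := dist_add_mul_I_eq_add_of_sq_sub_eq (by positivity) (by positivity)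
    (sq_div_sub_div_eq_four_mul_of_det_eq_one (Int.cast_ne_zero.2 hq.ne')
      (Int.cast_ne_zero.2 hs.ne') hdetR)
  push_cast at key
  exact key

/-- For Farey neighbors `p/q` and `r/s` (in lowest terms, positive denominators,
`q*r - p*s = 1`), the Ford circles `C[p/q]` and `C[r/s]` are externally tangent:
the distance between their centers equals the sum of their radii. Here the plane
is identified with `ℂ`, and the Ford circle `C[p/q]` has center `p/q + i/(2q²)`
and radius `1/(2q²)`. -/
theorem ford_circles_externally_tangent (p q r s : ℤ)
    (hq : 0 < q) (hs : 0 < s)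
    (hpq : Int.gcd p q = 1) (hrs : Int.gcd r s = 1)
    (hdet : q * r - p * s = 1) :
    dist ((p : ℂ) / q + (1 / (2 * (q : ℂ) ^ 2)) * Complex.I)
        ((r : ℂ) / s + (1 / (2 * (s : ℂ) ^ 2)) * Complex.I)
      = 1 / (2 * (q : ℝ) ^ 2) + 1 / (2 * (s : ℝ) ^ 2) :=
  ford_circles_externally_tangent_general p q r s hq hs hdet
end

section
/- For any two fractions p/q and r/s in lowest terms with q, s > 0, the Ford circles C[p/q] and C[r/s] are either disjoint or externally tangent; i.e., the distance between their centers is at least the sum of their radii. -/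
/-- For any two distinct fractions `p/q` and `r/s` in lowest terms with positive
denominators, the Ford circles `C[p/q]` and `C[r/s]` are either disjoint or
externally tangent: the distance between their centers is at least the sum of
their radii. The plane is identified with `ℂ`; `C[p/q]` has center
`p/q + i/(2q²)` and radius `1/(2q²)`. -/
theorem ford_circles_disjoint_or_tangent (p q r s : ℤ)
    (hq : 0 < q) (hs : 0 < s)
    (hpq : Int.gcd p q = 1) (hrs : Int.gcd r s = 1)
    (hne : p * s ≠ r * q) :
    1 / (2 * (q : ℝ) ^ 2) + 1 / (2 * (s : ℝ) ^ 2)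
      ≤ dist ((p : ℂ) / q + (1 / (2 * (q : ℂ) ^ 2)) * Complex.I)
          ((r : ℂ) / s + (1 / (2 * (s : ℂ) ^ 2)) * Complex.I) := by
  have hq' : (0:ℝ) < (q:ℝ) := by exact_mod_cast hq
  have hs' : (0:ℝ) < (s:ℝ) := by exact_mod_cast hs
  have hqe : ((q:ℝ)) ≠ 0 := ne_of_gt hq'
  have hse : ((s:ℝ)) ≠ 0 := ne_of_gt hs'
  have hkey : (1:ℝ) ≤ ((p*s - r*q : ℤ) : ℝ)^2 := by
    have h1 : p*s - r*q ≠ 0 := sub_ne_zero.mpr hne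
    have h2 : (1:ℤ) ≤ (p*s - r*q)^2 := by
      have := Int.one_le_abs h1
      nlinarith [abs_nonneg (p*s - r*q), sq_abs (p*s - r*q)]
    exact_mod_cast h2
  push_cast at hkey
  set z := ((p : ℂ) / q + (1 / (2 * (q : ℂ) ^ 2)) * Complex.I)
  set w := ((r : ℂ) / s + (1 / (2 * (s : ℂ) ^ 2)) * Complex.I)
  have hre : (z - w).re = (p:ℝ)/q - (r:ℝ)/s := by
    simp [z, w, Complex.div_re, Complex.div_im, Complex.normSq_apply, sq,
      Complex.mul_re, Complex.mul_im, Complex.intCast_re, Complex.intCast_im]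
    field_simp
  have him : (z - w).im = 1/(2*(q:ℝ)^2) - 1/(2*(s:ℝ)^2) := by
    simp [z, w, Complex.div_re, Complex.div_im, Complex.normSq_apply, sq,
      Complex.mul_re, Complex.mul_im, Complex.intCast_re, Complex.intCast_im]
  have hdist : dist z w = Real.sqrt (((p:ℝ)/q - (r:ℝ)/s)^2 + (1/(2*(q:ℝ)^2) - 1/(2*(s:ℝ)^2))^2) := by
    rw [Complex.dist_eq, Complex.norm_def, Complex.normSq_apply, hre, him]
    ring_nf
  rw [hdist]
  rw [Real.le_sqrt (by positivity)]
  have hA : (p:ℝ)/q - (r:ℝ)/s = ((p:ℝ)*s - (r:ℝ)*q)/((q:ℝ)*s) := by field_simp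
  rw [hA]
  have e : (((p:ℝ)*s - (r:ℝ)*q)/((q:ℝ)*s))^2 + (1/(2*(q:ℝ)^2) - 1/(2*(s:ℝ)^2))^2
      - (1 / (2 * (q : ℝ) ^ 2) + 1 / (2 * (s : ℝ) ^ 2))^2
      = (((p:ℝ)*s - (r:ℝ)*q)^2 - 1)/(((q:ℝ)*s)^2) := by
    field_simp
    ring
  nlinarith [div_nonneg (by linarith [hkey] : (0:ℝ) ≤ ((p:ℝ)*s - (r:ℝ)*q)^2 - 1) (by positivity : (0:ℝ) ≤ ((q:ℝ)*s)^2)]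
  positivity
end

section
/- The map ρ on [0,1) defined by ρ(t) = (2t-1)/(t-1) mod 1 for t ∈ [0,1/2) and ρ(t) = (1-t)/t mod 1 for t ∈ [1/2,1) sends the mediant (p+r)/(q+s) of any pair of Farey neighbors 0 ≤ p/q < r/s ≤ 1 (other than the pair 0/1, 1/1) to a rational number with strictly smaller denominator. -/
/-!
For integers `0 < n < d`, clearing denominators gives `ρ(n/d) = (d - 2n)/(d - n) mod 1` on
`[0, 1/2)` and `ρ(n/d) = (d - n)/n mod 1` on `[1/2, 1)`. Taking the fractional part does not
change the denominator, so the denominator of `ρ(n/d)` divides `d - n` or `n`, both `< d`.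
Farey neighbours `0 ≤ p/q < r/s ≤ 1` satisfy `0 ≤ p < q` and `0 < r ≤ s`, so this applies
to the mediant with `n = p + r` and `d = q + s`.
-/

/-- The map `ρ` on `[0,1)`: `ρ(t) = (2t-1)/(t-1) (mod 1)` for `t ∈ [0,1/2)`,
and `ρ(t) = (1-t)/t (mod 1)` for `t ∈ [1/2,1)`. -/
def rhoMap (t : ℚ) : ℚ :=
  if t < 1 / 2 then Int.fract ((2 * t - 1) / (t - 1)) else Int.fract ((1 - t) / t)

lemma den_intCast_div_intCast_le {a b : ℤ} (hb : 0 < b) : (((a : ℚ) / b).den : ℤ) ≤ b :=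
  Int.le_of_dvd hb (by rw [← Rat.divInt_eq_div]; exact Rat.den_dvd a b)

theorem rhoMap_intCast_div_den_lt {n d : ℤ} (hn : 0 < n) (hnd : n < d) :
    ((rhoMap (n / d)).den : ℤ) < d := by
  have hnQ : (n : ℚ) ≠ 0 := by exact_mod_cast hn.ne'
  have hdQ : (d : ℚ) ≠ 0 := by exact_mod_cast (hn.trans hnd).ne'
  have hdnQ : (d : ℚ) - n ≠ 0 := sub_ne_zero.2 (by exact_mod_cast hnd.ne')
  unfold rhoMap
  split_ifs
  · have hform :
        (2 * (n / d : ℚ) - 1) / (n / d - 1) = ((d - 2 * n : ℤ) : ℚ) / ((d - n : ℤ) : ℚ) := by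
      have hden : (n / d : ℚ) - 1 ≠ 0 := by
        rw [div_sub_one hdQ]; exact div_ne_zero (by rwa [← neg_sub, neg_ne_zero]) hdQ
      rw [div_eq_div_iff hden (by push_cast; exact hdnQ)]
      field_simp
      push_cast
      ring
    rw [Rat.den_intFract, hform]
    linarith [den_intCast_div_intCast_le (a := d - 2 * n) (b := d - n) (by omega)]
  · have hform : (1 - (n / d : ℚ)) / (n / d) = ((d - n : ℤ) : ℚ) / (n : ℚ) := by
      push_cast
      field_simp
    rw [Rat.den_intFract, hform]
    linarith [den_intCast_div_intCast_le (a := d - n) hn]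

theorem rhoMap_mediant_denominator_lt_general (p q r s : ℤ)
    (hq : 0 < q) (hs : 0 < s)
    (hdet : q * r - p * s = 1)
    (h0 : 0 ≤ (p : ℚ) / q) (h1 : (r : ℚ) / s ≤ 1) :
    ((rhoMap (((p : ℚ) + r) / ((q : ℚ) + s))).den : ℤ) < q + s := by
  have hp : 0 ≤ p := by simpa using (le_div_iff₀ (by exact_mod_cast hq : (0 : ℚ) < q)).1 h0
  have hrs : r ≤ s := by exact_mod_cast (div_le_one₀ (by exact_mod_cast hs)).1 h1
  have hr : 0 < r := by nlinarith
  have hpq : p < q := by nlinarith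
  exact_mod_cast rhoMap_intCast_div_den_lt (n := p + r) (d := q + s) (by omega) (by omega)

/-- The map `ρ` sends the mediant `(p+r)/(q+s)` of any pair of Farey neighbors
`0 ≤ p/q < r/s ≤ 1` (other than the pair `0/1, 1/1`) to a rational number with
strictly smaller denominator. -/
theorem rhoMap_mediant_denominator_lt (p q r s : ℤ)
    (hq : 0 < q) (hs : 0 < s)
    (hpq : Int.gcd p q = 1) (hrs : Int.gcd r s = 1)
    (hdet : q * r - p * s = 1)
    (h0 : 0 ≤ (p : ℚ) / q) (h1 : (r : ℚ) / s ≤ 1)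
    (hne : ¬((p : ℚ) / q = 0 ∧ (r : ℚ) / s = 1)) :
    ((rhoMap (((p : ℚ) + r) / ((q : ℚ) + s))).den : ℤ) < q + s :=
  rhoMap_mediant_denominator_lt_general p q r s hq hs hdet h0 h1
end

section
/- Let d ≥ 2 and let K ⊆ 𝕋 be a nonempty compact set invariant under g_d(z) = conj(z)^d (i.e., g_d(K) ⊆ K) whose smallest closed circular arc H(K) containing K has arc length strictly less than 2π/(d+1). Then K is a single point, which is a fixed point of g_d. -/
/-- The closed circular arc of the unit circle starting at angle `a` and of
arc length `ℓ`. -/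
def circleArc (a ℓ : ℝ) : Set ℂ :=
  (fun θ : ℝ => Complex.exp (θ * Complex.I)) '' Set.Icc a (a + ℓ)

/-!
Lift `K` to a compact set `S` of angles inside an interval of length `ℓ`. Invariance of `K`
says that for every `θ ∈ S` some `φ ∈ S` satisfies `φ ≡ -dθ [PMOD 2π]`. Applying this to
the endpoints `θ₁ ≤ θ₂` of `S` gives `φ₁ - φ₂ = d (θ₂ - θ₁) + 2πm` with
`|φ₁ - φ₂| ≤ θ₂ - θ₁`; since `(d + 1)(θ₂ - θ₁) < 2π` this forces `m = 0`, and then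
`d ≥ 2` forces `θ₁ = θ₂`.
-/

open Set AddCommGroup

lemma eq_zero_of_abs_mul_add_zsmul_le {c p L : ℝ} (hc : 1 < c) (hL : 0 ≤ L)
    (hp : (c + 1) * L < p) {m : ℤ} (h : |c * L + m • p| ≤ L) : L = 0 := by
  have hp0 : 0 ≤ p := by nlinarith
  rw [zsmul_eq_mul, abs_le] at h
  obtain ⟨hlow, hup⟩ := h
  have hm : m = 0 := by
    by_contra hm
    obtain hm | hm := Int.lt_or_gt_of_ne hm
    · have : (m : ℝ) ≤ -1 := by exact_mod_cast Int.le_sub_one_of_lt hm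
      nlinarith
    · have : (1 : ℝ) ≤ m := by exact_mod_cast hm
      nlinarith
  simp only [hm, Int.cast_zero, zero_mul, add_zero] at hup
  nlinarith

lemma subsingleton_of_forall_exists_modEq_neg_mul {S : Set ℝ} {c p : ℝ} (hc : 1 < c)
    (hS : IsCompact S) (hdiam : ∀ x ∈ S, ∀ y ∈ S, (c + 1) * (x - y) < p)
    (hmap : ∀ x ∈ S, ∃ y ∈ S, y ≡ -(c * x) [PMOD p]) : S.Subsingleton := by
  intro x hx y hy
  obtain ⟨θ₁, hθ₁, hleast⟩ := hS.exists_isLeast ⟨x, hx⟩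
  obtain ⟨θ₂, hθ₂, hgreatest⟩ := hS.exists_isGreatest ⟨x, hx⟩
  obtain ⟨φ₁, hφ₁, h₁⟩ := hmap θ₁ hθ₁
  obtain ⟨φ₂, hφ₂, h₂⟩ := hmap θ₂ hθ₂
  obtain ⟨m, hm⟩ := modEq_iff_zsmul'.1 (h₁.sub h₂)
  have hφ : |c * (θ₂ - θ₁) + (-m) • p| ≤ θ₂ - θ₁ := by
    have : c * (θ₂ - θ₁) + (-m) • p = φ₁ - φ₂ := by rw [neg_zsmul, ← hm]; ring
    rw [this, abs_sub_le_iff]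
    constructor <;> linarith [hleast hφ₂, hgreatest hφ₁, hleast hφ₁, hgreatest hφ₂]
  have hθ : θ₂ - θ₁ = 0 :=
    eq_zero_of_abs_mul_add_zsmul_le hc (sub_nonneg.2 (hleast hθ₂)) (hdiam _ hθ₂ _ hθ₁) hφ
  linarith [hleast hx, hgreatest hx, hleast hy, hgreatest hy]

open Complex

lemma conj_exp_ofReal_mul_I_pow (θ : ℝ) (n : ℕ) :
    starRingEnd ℂ (exp (θ * I)) ^ n = exp (↑(-(n * θ)) * I) := by
  rw [← exp_conj, ← exp_nat_mul, map_mul, conj_ofReal, conj_I]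
  push_cast
  ring_nf

lemma exp_ofReal_mul_I_eq_iff_modEq {x y : ℝ} :
    exp (x * I) = exp (y * I) ↔ x ≡ y [PMOD 2 * Real.pi] := by
  rw [← Circle.coe_exp, ← Circle.coe_exp, Circle.coe_inj, Circle.exp_inj]

lemma exists_isCompact_image_eq_of_subset_circleArc {K : Set ℂ} {a ℓ : ℝ} (hK : IsCompact K)
    (h : K ⊆ circleArc a ℓ) :
    ∃ S ⊆ Icc a (a + ℓ), IsCompact S ∧ (fun θ : ℝ => exp (θ * I)) '' S = K := by
  have hcont : Continuous fun θ : ℝ => exp (θ * I) := by fun_prop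
  exact ⟨_, inter_subset_left, isCompact_Icc.inter_right (hK.isClosed.preimage hcont),
    by rw [image_inter_preimage]; exact inter_eq_right.2 h⟩

theorem small_invariant_set_is_fixed_point_general (d : ℕ) (hd : 2 ≤ d)
    (K : Set ℂ)
    (hKne : K.Nonempty) (hKcomp : IsCompact K)
    (hinv : ∀ z ∈ K, (starRingEnd ℂ z) ^ d ∈ K)
    (a ℓ : ℝ) (hℓ : ℓ < 2 * Real.pi / (d + 1))
    (harc : K ⊆ circleArc a ℓ) :
    ∃ z : ℂ, K = {z} ∧ (starRingEnd ℂ z) ^ d = z := by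
  obtain ⟨S, hSarc, hScomp, rfl⟩ := exists_isCompact_image_eq_of_subset_circleArc hKcomp harc
  have hS : S.Subsingleton := by
    refine subsingleton_of_forall_exists_modEq_neg_mul (c := d) (p := 2 * Real.pi)
      (by exact_mod_cast hd) hScomp (fun x hx y hy => ?_) (fun θ hθ => ?_)
    · calc ((d : ℝ) + 1) * (x - y) ≤ (d + 1) * ℓ := by
            gcongr
            linarith [(hSarc hx).2, (hSarc hy).1]
        _ < 2 * Real.pi := (lt_div_iff₀' (by positivity)).1 hℓ
    · obtain ⟨φ, hφ, he⟩ := hinv _ (mem_image_of_mem _ hθ)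
      rw [conj_exp_ofReal_mul_I_pow] at he
      exact ⟨φ, hφ, exp_ofReal_mul_I_eq_iff_modEq.1 he⟩
  obtain ⟨θ, rfl⟩ := exists_eq_singleton_iff_nonempty_subsingleton.2 ⟨hKne.of_image, hS⟩
  rw [image_singleton] at hinv ⊢
  exact ⟨_, rfl, hinv _ rfl⟩

/-- Let `d ≥ 2` and let `K` be a nonempty compact subset of the unit circle
invariant under `g_d(z) = conj(z)^d`, contained in a closed arc of length
strictly less than `2π/(d+1)`. Then `K` is a single point, which is a fixed
point of `g_d`. -/
theorem small_invariant_set_is_fixed_point (d : ℕ) (hd : 2 ≤ d)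
    (K : Set ℂ) (hKcirc : K ⊆ {z : ℂ | ‖z‖ = 1})
    (hKne : K.Nonempty) (hKcomp : IsCompact K)
    (hinv : ∀ z ∈ K, (starRingEnd ℂ z) ^ d ∈ K)
    (a ℓ : ℝ) (hℓ0 : 0 ≤ ℓ) (hℓ : ℓ < 2 * Real.pi / (d + 1))
    (harc : K ⊆ circleArc a ℓ) :
    ∃ z : ℂ, K = {z} ∧ (starRingEnd ℂ z) ^ d = z :=
  small_invariant_set_is_fixed_point_general d hd K hKne hKcomp hinv a ℓ hℓ harc
end

section
/- Let d ≥ 2 and suppose K ⊆ 𝕋 is compact, nonempty, g_d-invariant (g_d(K) ⊆ K, where g_d(z) = conj(z)^d). Then the smallest closed arc containing K contains a fixed point of g_d (i.e., a (d+1)-st root of unity). -/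
open Complex Set

theorem exists_start_mem_and_subset_circleArc {K : Set ℂ} (hK : IsClosed K) (hne : K.Nonempty)
    {a ℓ : ℝ} (harc : K ⊆ circleArc a ℓ) :
    ∃ α ∈ Icc a (a + ℓ), exp (α * I) ∈ K ∧ K ⊆ circleArc α (a + ℓ - α) := by
  set S : Set ℝ := Icc a (a + ℓ) ∩ (fun θ : ℝ => exp (θ * I)) ⁻¹' K
  have mem_S : ∀ z ∈ K, ∃ θ ∈ S, exp (θ * I) = z := by
    intro z hz
    obtain ⟨θ, hθ, rfl⟩ := harc hz
    exact ⟨θ, ⟨hθ, hz⟩, rfl⟩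
  have hS_closed : IsClosed S := isClosed_Icc.inter (hK.preimage (by fun_prop))
  have hS_bdd : BddBelow S := ⟨a, fun θ hθ => hθ.1.1⟩
  obtain ⟨θ₀, hθ₀, -⟩ := mem_S _ hne.some_mem
  have hαS : sInf S ∈ S := hS_closed.csInf_mem ⟨θ₀, hθ₀⟩ hS_bdd
  refine ⟨sInf S, hαS.1, hαS.2, fun z hz => ?_⟩
  obtain ⟨θ, hθ, rfl⟩ := mem_S z hz
  exact ⟨θ, ⟨csInf_le hS_bdd hθ, by linarith [hθ.1.2]⟩, rfl⟩

theorem exp_mul_I_mem_of_forall_subset_circleArc_le {K : Set ℂ} (hK : IsClosed K)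
    (hne : K.Nonempty) {a ℓ : ℝ} (harc : K ⊆ circleArc a ℓ)
    (hmin : ∀ a' ℓ' : ℝ, 0 ≤ ℓ' → K ⊆ circleArc a' ℓ' → ℓ ≤ ℓ') :
    exp (a * I) ∈ K := by
  obtain ⟨α, ⟨haα, hαℓ⟩, hαK, hsub⟩ := exists_start_mem_and_subset_circleArc hK hne harc
  have : ℓ ≤ a + ℓ - α := hmin α _ (by linarith) hsub
  rwa [show a = α by linarith]

theorem conj_exp_mul_I_pow (θ : ℝ) (d : ℕ) :
    starRingEnd ℂ (exp (θ * I)) ^ d = exp (↑(-(d * θ)) * I) := by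
  rw [← exp_conj, ← exp_nat_mul, map_mul, conj_ofReal, conj_I]
  push_cast
  ring_nf

theorem exists_pow_succ_eq_one_mem_circleArc {a ℓ θ : ℝ} (d : ℕ) (hθ : θ ∈ Icc a (a + ℓ))
    (h : exp (↑(-(d * θ)) * I) ∈ circleArc a ℓ) :
    ∃ z ∈ circleArc a ℓ, z ^ (d + 1) = 1 := by
  obtain ⟨s, hs, hse⟩ := h
  obtain ⟨n, hn⟩ := exp_eq_exp_iff_exists_int.mp hse
  set φ : ℝ := (1 / (d + 1) : ℝ) • s + (d / (d + 1) : ℝ) • θ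
  have hφ : φ ∈ Icc a (a + ℓ) :=
    convex_Icc a (a + ℓ) hs hθ (by positivity) (by positivity) (by field_simp; ring)
  have hφ_mul : ((d + 1 : ℕ) : ℂ) * (φ * I) = n * (2 * Real.pi * I) := by
    have hφ' : ((d : ℝ) + 1) * φ = s + d * θ := by
      simp only [φ, smul_eq_mul]
      field_simp
    have hφ'' := congrArg ((↑) : ℝ → ℂ) hφ'
    push_cast at hn hφ'' ⊢
    linear_combination I * hφ'' + hn
  exact ⟨exp (φ * I), ⟨φ, hφ, rfl⟩, by rw [← exp_nat_mul, hφ_mul, exp_int_mul_two_pi_mul_I]⟩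

theorem smallest_arc_contains_fixed_point_general (d : ℕ)
    (K : Set ℂ)
    (hKne : K.Nonempty) (hKcomp : IsCompact K)
    (hinv : ∀ z ∈ K, (starRingEnd ℂ z) ^ d ∈ K)
    (a ℓ : ℝ) (hℓ0 : 0 ≤ ℓ) (harc : K ⊆ circleArc a ℓ)
    (hmin : ∀ a' ℓ' : ℝ, 0 ≤ ℓ' → K ⊆ circleArc a' ℓ' → ℓ ≤ ℓ') :
    ∃ z ∈ circleArc a ℓ, z ^ (d + 1) = 1 := by
  have hstart : exp (a * I) ∈ K :=
    exp_mul_I_mem_of_forall_subset_circleArc_le hKcomp.isClosed hKne harc hmin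
  have himage : exp (↑(-(d * a)) * I) ∈ circleArc a ℓ := by
    rw [← conj_exp_mul_I_pow]
    exact harc (hinv _ hstart)
  exact exists_pow_succ_eq_one_mem_circleArc d (left_mem_Icc.mpr (le_add_of_nonneg_right hℓ0)) himage

/-- Let `d ≥ 2` and `K ⊆ 𝕋` be compact, nonempty and invariant under
`g_d(z) = conj(z)^d`. Then the smallest closed arc containing `K` contains a
fixed point of `g_d`, i.e. a `(d+1)`-st root of unity. -/
theorem smallest_arc_contains_fixed_point (d : ℕ) (hd : 2 ≤ d)
    (K : Set ℂ) (hKcirc : K ⊆ {z : ℂ | ‖z‖ = 1})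
    (hKne : K.Nonempty) (hKcomp : IsCompact K)
    (hinv : ∀ z ∈ K, (starRingEnd ℂ z) ^ d ∈ K)
    (a ℓ : ℝ) (hℓ0 : 0 ≤ ℓ) (harc : K ⊆ circleArc a ℓ)
    (hmin : ∀ a' ℓ' : ℝ, 0 ≤ ℓ' → K ⊆ circleArc a' ℓ' → ℓ ≤ ℓ') :
    ∃ z ∈ circleArc a ℓ, z ^ (d + 1) = 1 :=
  smallest_arc_contains_fixed_point_general d K hKne hKcomp hinv a ℓ hℓ0 harc hmin
end

section
/- Let F_n denote the finite set of rationals in [0,1] obtained as the image of the dyadic set D_n = {k/2^n : 0 ≤ k ≤ 2^n} under the inverse of the Minkowski question mark function (equivalently, built inductively from F_0 = {0/1, 1/1} by inserting the mediant between each pair of adjacent elements). Then any two adjacent complementary intervals I, J of F_n (intervals between consecutive elements of F_n sharing an endpoint) satisfy 1/n ≤ |I|/|J| ≤ n for n ≥ 1. -/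
/-!
Consecutive elements `a < b < c` of `F_n` are Farey neighbours, so `|I| = 1 / (q_a q_b)`,
`|J| = 1 / (q_b q_c)` and `|I| / |J| = q_c / q_a`. Neighbours in `F_n` have denominators within
a factor `n + 1`: if `q ≤ K s` and `s ≤ K q`, the mediant has denominator
`q + s ≤ (K + 1) min(q, s)`. Elements two steps apart in `F_{m+1}` are either neighbours in
`F_m`, or the mediants of the two pairs around some `b ∈ F_m`, with denominators `q_a' + q_b`
and `q_b + q_c'`; either way their denominators are within a factor `m + 1`.
-/

/-- The mediant of two rationals: `(p/q, r/s) ↦ (p+r)/(q+s)`. -/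
def mediant (a b : ℚ) : ℚ :=
  ((a.num : ℚ) + (b.num : ℚ)) / ((a.den : ℚ) + (b.den : ℚ))

/-- Insert the mediant between each pair of adjacent entries of a list. -/
def insertMediants : List ℚ → List ℚ
  | a :: b :: rest => a :: mediant a b :: insertMediants (b :: rest)
  | l => l

/-- The Farey-type partition points `F_n` of `[0,1]`: `F_0 = [0, 1]`, and
`F_{n+1}` is obtained from `F_n` by inserting the mediant between each pair of
consecutive elements. -/
def fareyList : ℕ → List ℚ
  | 0 => [0, 1]
  | n + 1 => insertMediants (fareyList n)


def IsFareyPair (a b : ℚ) : Prop := b.num * a.den - a.num * b.den = 1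

def DenComparable (K : ℕ) (a b : ℚ) : Prop := b.den ≤ K * a.den ∧ a.den ≤ K * b.den

theorem List.IsChain.rel_of_getElem? {α : Type*} {R : α → α → Prop} {l : List α}
    (hl : l.IsChain R) {i : ℕ} {a b : α} (ha : l[i]? = some a) (hb : l[i + 1]? = some b) :
    R a b := by
  obtain ⟨hi, rfl⟩ := List.getElem?_eq_some_iff.mp hb
  obtain ⟨_, rfl⟩ := List.getElem?_eq_some_iff.mp ha
  exact hl.getElem i hi

namespace IsFareyPair

variable {a b c : ℚ}

theorem mediant_num_den (h : IsFareyPair a b) :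
    (mediant a b).num = a.num + b.num ∧ ((mediant a b).den : ℤ) = a.den + b.den := by
  have hpos : (0 : ℤ) < a.den + b.den := by positivity
  have hcop : IsCoprime (a.num + b.num) (a.den + b.den : ℤ) :=
    ⟨a.den, -a.num, by unfold IsFareyPair at h; linarith⟩
  have hcop' := Int.isCoprime_iff_gcd_eq_one.mp hcop
  have hmed : mediant a b = ((a.num + b.num : ℤ) : ℚ) / ((a.den + b.den : ℤ) : ℚ) := by
    unfold mediant; push_cast; ring
  rw [hmed]
  exact ⟨Rat.num_div_eq_of_coprime hpos hcop', Rat.den_div_eq_of_coprime hpos hcop'⟩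

theorem mediant_den (h : IsFareyPair a b) : (mediant a b).den = a.den + b.den := by
  exact_mod_cast h.mediant_num_den.2

theorem mediant_left (h : IsFareyPair a b) : IsFareyPair a (mediant a b) := by
  obtain ⟨hnum, hden⟩ := h.mediant_num_den
  unfold IsFareyPair at h ⊢
  rw [hnum, hden]
  linear_combination h

theorem mediant_right (h : IsFareyPair a b) : IsFareyPair (mediant a b) b := by
  obtain ⟨hnum, hden⟩ := h.mediant_num_den
  unfold IsFareyPair at h ⊢
  rw [hnum, hden]
  linear_combination h

theorem sub_eq (h : IsFareyPair a b) : b - a = 1 / ((a.den : ℚ) * b.den) := by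
  have h' : (b.num : ℚ) * a.den - a.num * b.den = 1 := by exact_mod_cast h
  rw [eq_div_iff (by positivity)]
  linear_combination (a.den : ℚ) * b.mul_den_eq_num - (b.den : ℚ) * a.mul_den_eq_num + h'

theorem sub_div_sub (hab : IsFareyPair a b) (hbc : IsFareyPair b c) :
    (b - a) / (c - b) = c.den / a.den := by
  rw [hab.sub_eq, hbc.sub_eq]
  field_simp

end IsFareyPair

theorem DenComparable.mediant_mediant {K : ℕ} {a b c : ℚ} (hab : IsFareyPair a b)
    (hbc : IsFareyPair b c) (h₁ : DenComparable K a b) (h₂ : DenComparable K b c) :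
    DenComparable K (mediant a b) (mediant b c) := by
  unfold DenComparable at *
  rw [hab.mediant_den, hbc.mediant_den]
  constructor <;> linarith

theorem DenComparable.mediant_left {K : ℕ} {a b : ℚ} (hab : IsFareyPair a b)
    (h : DenComparable K a b) : DenComparable (K + 1) a (mediant a b) := by
  unfold DenComparable at *
  rw [hab.mediant_den]
  constructor <;> nlinarith [a.pos, b.pos]

theorem DenComparable.mediant_right {K : ℕ} {a b : ℚ} (hab : IsFareyPair a b)
    (h : DenComparable K a b) : DenComparable (K + 1) (mediant a b) b := by
  unfold DenComparable at *
  rw [hab.mediant_den]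
  constructor <;> nlinarith [a.pos, b.pos]

theorem insertMediants_cons_head? (a : ℚ) :
    ∀ l : List ℚ, (insertMediants (a :: l)).head? = some a
  | [] => rfl
  | _ :: _ => rfl

theorem List.IsChain.insertMediants {R S : ℚ → ℚ → Prop}
    (hRS : ∀ a b, R a b → S a (mediant a b) ∧ S (mediant a b) b) :
    ∀ {l : List ℚ}, l.IsChain R → (insertMediants l).IsChain S
  | [], _ => .nil
  | [_], _ => .singleton _
  | a :: b :: rest, h => by
    rw [List.isChain_cons_cons] at h
    rw [_root_.insertMediants, List.isChain_cons_cons, List.isChain_cons]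
    refine ⟨(hRS a b h.1).1, fun y hy => ?_, insertMediants hRS h.2⟩
    rw [insertMediants_cons_head?, Option.mem_some_iff] at hy
    exact hy ▸ (hRS a b h.1).2

/-- Elements two steps apart in `insertMediants l` are either two neighbours of `l`, or the
mediants of the two pairs around a middle element of `l`. -/
theorem rel_of_insertMediants_getElem? {R T : ℚ → ℚ → Prop} (hT : ∀ a b, R a b → T a b)
    (hT' : ∀ a b c, R a b → R b c → T (mediant a b) (mediant b c)) :
    ∀ {l : List ℚ}, l.IsChain R → ∀ {i : ℕ} {x z : ℚ},
      (insertMediants l)[i]? = some x → (insertMediants l)[i + 2]? = some z → T x z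
  | [], _, _, _, _, hx, _ => by simp [insertMediants] at hx
  | [_], _, _, _, _, _, hz => by simp [insertMediants] at hz
  | a :: b :: rest, h, i, x, z, hx, hz => by
    rw [List.isChain_cons_cons] at h
    rw [insertMediants] at hx hz
    match i, rest with
    | 0, _ =>
      simp only [List.getElem?_cons_zero, Option.some_inj] at hx
      rw [List.getElem?_cons_succ, List.getElem?_cons_succ, ← List.head?_eq_getElem?,
        insertMediants_cons_head?, Option.some_inj] at hz
      exact hx ▸ hz ▸ hT a b h.1
    | 1, [] => simp [insertMediants] at hz
    | 1, c :: _ =>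
      rw [List.isChain_cons_cons] at h
      simp only [insertMediants, List.getElem?_cons_succ, List.getElem?_cons_zero,
        Option.some_inj] at hx hz
      exact hx ▸ hz ▸ hT' a b c h.1 h.2.1
    | i + 2, _ =>
      simp only [List.getElem?_cons_succ] at hx hz
      exact rel_of_insertMediants_getElem? hT hT' h.2 hx hz

theorem isChain_fareyList (n : ℕ) :
    (fareyList n).IsChain (fun a b => IsFareyPair a b ∧ DenComparable (n + 1) a b) := by
  induction n with
  | zero =>
    simp only [fareyList, List.isChain_pair, IsFareyPair, DenComparable]
    norm_num
  | succ n ih =>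
    exact ih.insertMediants fun a b h =>
      ⟨⟨h.1.mediant_left, h.2.mediant_left h.1⟩, ⟨h.1.mediant_right, h.2.mediant_right h.1⟩⟩

theorem denComparable_fareyList_getElem? {n i : ℕ} {x z : ℚ}
    (hx : (fareyList (n + 1))[i]? = some x) (hz : (fareyList (n + 1))[i + 2]? = some z) :
    DenComparable (n + 1) x z :=
  rel_of_insertMediants_getElem? (fun _ _ h => h.2)
    (fun _ _ _ h₁ h₂ => h₁.2.mediant_mediant h₁.1 h₂.1 h₂.2) (isChain_fareyList n) hx hz

theorem DenComparable.div_mem_Icc {K : ℕ} {a c : ℚ} (hK : 0 < K) (h : DenComparable K a c) :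
    1 / (K : ℚ) ≤ c.den / a.den ∧ (c.den : ℚ) / a.den ≤ K := by
  have h₁ : (c.den : ℚ) ≤ K * a.den := by exact_mod_cast h.1
  have h₂ : (a.den : ℚ) ≤ K * c.den := by exact_mod_cast h.2
  constructor
  · rw [div_le_div_iff₀ (by positivity) (by positivity)]
    linarith
  · rwa [div_le_iff₀ (by positivity)]

/-- Any two adjacent complementary intervals `I = (a,b)`, `J = (b,c)` of `F_n`
(with `a, b, c` consecutive elements of `F_n`) satisfy `1/n ≤ |I|/|J| ≤ n`
for `n ≥ 1`. -/
theorem adjacent_farey_intervals_comparable (n : ℕ) (hn : 1 ≤ n)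
    (i : ℕ) (a b c : ℚ)
    (ha : (fareyList n)[i]? = some a)
    (hb : (fareyList n)[i + 1]? = some b)
    (hc : (fareyList n)[i + 2]? = some c) :
    1 / (n : ℚ) ≤ (b - a) / (c - b) ∧ (b - a) / (c - b) ≤ (n : ℚ) := by
  obtain ⟨m, rfl⟩ : ∃ m, n = m + 1 := ⟨n - 1, by omega⟩
  have hchain := isChain_fareyList (m + 1)
  rw [(hchain.rel_of_getElem? ha hb).1.sub_div_sub (hchain.rel_of_getElem? hb hc).1]
  exact_mod_cast (denComparable_fareyList_getElem? ha hc).div_mem_Icc m.succ_pos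
end

section
/- With F_n as above, there is an absolute constant C ≥ 1 such that for all n ≥ 1, if I and J are complementary intervals of F_n separated by at most two adjacent complementary intervals of F_n, then 1/(Cn) ≤ |I|/|J| ≤ Cn. -/
/-!
Consecutive points `a < b` of `F_n` are Farey neighbours, `b.num * a.den - a.num * b.den = 1`
(taking mediants preserves this), so `(a, b)` has length `1 / (a.den * b.den)` and `|I| / |J|` is a
ratio of products of denominators. Two properties of the denominators of `F_n`, both preserved by
inserting mediants, control these products: adjacent denominators are within a factor `n + 1` of
each other, and of three consecutive ones the middle one is either the sum of the outer two or the
smallest, with the outer two within a factor `2` (`FareyShape`). A case analysis over the at most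
five consecutive denominators involved bounds the ratio by `4 (n + 2) ≤ 12 n`.
-/

theorem insertMediants_getElem?_two_mul (l : List ℚ) (j : ℕ) :
    (insertMediants l)[2 * j]? = l[j]? := by
  fun_induction insertMediants l generalizing j with
  | case1 a b rest ih => cases j <;> simp_all [Nat.mul_succ]
  | case2 l h =>
    match l, h with
    | [], _ => simp
    | [a], _ => cases j <;> simp
    | _ :: _ :: _, h => exact (h _ _ _ rfl).elim

theorem insertMediants_getElem?_two_mul_add_one (l : List ℚ) (j : ℕ) :
    (insertMediants l)[2 * j + 1]? = Option.map₂ mediant l[j]? l[j + 1]? := by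
  fun_induction insertMediants l generalizing j with
  | case1 a b rest ih => cases j <;> simp_all [Nat.mul_succ]
  | case2 l h =>
    match l, h with
    | [], _ => simp
    | [a], _ => cases j <;> simp
    | _ :: _ :: _, h => exact (h _ _ _ rfl).elim

theorem insertMediants_adjacent {l : List ℚ} {i : ℕ} {x y : ℚ}
    (hx : (insertMediants l)[i]? = some x) (hy : (insertMediants l)[i + 1]? = some y) :
    ∃ j a b, l[j]? = some a ∧ l[j + 1]? = some b ∧
      (x = a ∧ y = mediant a b ∨ x = mediant a b ∧ y = b) := by
  obtain ⟨j, rfl | rfl⟩ := Nat.even_or_odd' i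
  · rw [insertMediants_getElem?_two_mul] at hx
    rw [insertMediants_getElem?_two_mul_add_one, hx] at hy
    obtain ⟨b, hb, rfl⟩ := Option.map_eq_some_iff.1 ((Option.map₂_coe_left _ _ _).symm.trans hy)
    exact ⟨j, x, b, hx, hb, .inl ⟨rfl, rfl⟩⟩
  · rw [show 2 * j + 1 + 1 = 2 * (j + 1) by ring, insertMediants_getElem?_two_mul] at hy
    rw [insertMediants_getElem?_two_mul_add_one, hy] at hx
    obtain ⟨a, ha, rfl⟩ := Option.map_eq_some_iff.1 ((Option.map₂_coe_right _ _ _).symm.trans hx)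
    exact ⟨j, a, y, ha, hy, .inr ⟨rfl, rfl⟩⟩

theorem insertMediants_triple {l : List ℚ} {i : ℕ} {x y z : ℚ}
    (hx : (insertMediants l)[i]? = some x) (hy : (insertMediants l)[i + 1]? = some y)
    (hz : (insertMediants l)[i + 2]? = some z) :
    (∃ j a b, l[j]? = some a ∧ l[j + 1]? = some b ∧ x = a ∧ y = mediant a b ∧ z = b) ∨
      ∃ j a b c, l[j]? = some a ∧ l[j + 1]? = some b ∧ l[j + 2]? = some c ∧
        x = mediant a b ∧ y = b ∧ z = mediant b c := by
  obtain ⟨j, rfl | rfl⟩ := Nat.even_or_odd' i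
  · rw [insertMediants_getElem?_two_mul] at hx
    rw [show 2 * j + 2 = 2 * (j + 1) by ring, insertMediants_getElem?_two_mul] at hz
    rw [insertMediants_getElem?_two_mul_add_one, hx, hz] at hy
    exact .inl ⟨j, x, z, hx, hz, rfl, by simpa [eq_comm] using hy, rfl⟩
  · rw [show 2 * j + 1 + 1 = 2 * (j + 1) by ring, insertMediants_getElem?_two_mul] at hy
    rw [insertMediants_getElem?_two_mul_add_one, hy] at hx
    rw [show 2 * j + 1 + 2 = 2 * (j + 1) + 1 by ring, insertMediants_getElem?_two_mul_add_one,
      hy] at hz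
    obtain ⟨a, ha, rfl⟩ := Option.map_eq_some_iff.1 ((Option.map₂_coe_right _ _ _).symm.trans hx)
    obtain ⟨c, hc, rfl⟩ := Option.map_eq_some_iff.1 ((Option.map₂_coe_left _ _ _).symm.trans hz)
    exact .inr ⟨j, a, y, c, ha, hy, hc, rfl, rfl, rfl⟩

theorem mediant_num_den {a b : ℚ} (h : b.num * a.den - a.num * b.den = 1) :
    (mediant a b).num = a.num + b.num ∧ (mediant a b).den = a.den + b.den := by
  have hpos : (0 : ℤ) < (a.den + b.den : ℕ) := by positivity
  have hcop : Nat.Coprime (a.num + b.num).natAbs ((a.den + b.den : ℕ) : ℤ).natAbs :=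
    Int.isCoprime_iff_gcd_eq_one.mp ⟨a.den, -a.num, by push_cast; linear_combination h⟩
  have hm : mediant a b = ((a.num + b.num : ℤ) : ℚ) / ((a.den + b.den : ℕ) : ℤ) := by
    simp [mediant]
  rw [hm]
  exact ⟨Rat.num_div_eq_of_coprime hpos hcop,
    by exact_mod_cast Rat.den_div_eq_of_coprime hpos hcop⟩

theorem sub_eq_one_div_den_mul_den {a b : ℚ} (h : b.num * a.den - a.num * b.den = 1) :
    (b : ℝ) - a = 1 / (a.den * b.den) := by
  have h' : (b.num : ℝ) * a.den - a.num * b.den = 1 := by exact_mod_cast h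
  rw [Rat.cast_def a, Rat.cast_def b]
  field_simp
  linear_combination h'

theorem fareyList_zero_adjacent {i : ℕ} {a b : ℚ} (ha : (fareyList 0)[i]? = some a)
    (hb : (fareyList 0)[i + 1]? = some b) : a = 0 ∧ b = 1 := by
  rcases i with _ | _ | i <;> simp_all [fareyList]

theorem fareyList_unimodular {n i : ℕ} {a b : ℚ} (ha : (fareyList n)[i]? = some a)
    (hb : (fareyList n)[i + 1]? = some b) : b.num * a.den - a.num * b.den = 1 := by
  induction n generalizing i a b with
  | zero => obtain ⟨rfl, rfl⟩ := fareyList_zero_adjacent ha hb; rfl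
  | succ n ih =>
    obtain ⟨j, a', b', ha', hb', ⟨rfl, rfl⟩ | ⟨rfl, rfl⟩⟩ := insertMediants_adjacent ha hb <;>
    · have h := ih ha' hb'
      rw [(mediant_num_den h).1, (mediant_num_den h).2]
      push_cast
      linear_combination h

theorem fareyList_succ_adjacent_den {n i : ℕ} {x y : ℚ}
    (hx : (fareyList (n + 1))[i]? = some x) (hy : (fareyList (n + 1))[i + 1]? = some y) :
    ∃ j a b, (fareyList n)[j]? = some a ∧ (fareyList n)[j + 1]? = some b ∧
      (x.den = a.den ∧ y.den = a.den + b.den ∨ x.den = a.den + b.den ∧ y.den = b.den) := by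
  obtain ⟨j, a, b, ha, hb, h⟩ := insertMediants_adjacent hx hy
  have hm := (mediant_num_den (fareyList_unimodular ha hb)).2
  refine ⟨j, a, b, ha, hb, ?_⟩
  rcases h with ⟨rfl, rfl⟩ | ⟨rfl, rfl⟩
  exacts [.inl ⟨rfl, hm⟩, .inr ⟨hm, rfl⟩]

theorem fareyList_succ_triple_den {n i : ℕ} {x y z : ℚ}
    (hx : (fareyList (n + 1))[i]? = some x) (hy : (fareyList (n + 1))[i + 1]? = some y)
    (hz : (fareyList (n + 1))[i + 2]? = some z) :
    (∃ j a b, (fareyList n)[j]? = some a ∧ (fareyList n)[j + 1]? = some b ∧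
      x.den = a.den ∧ y.den = a.den + b.den ∧ z.den = b.den) ∨
    ∃ j a b c, (fareyList n)[j]? = some a ∧ (fareyList n)[j + 1]? = some b ∧
      (fareyList n)[j + 2]? = some c ∧
      x.den = a.den + b.den ∧ y.den = b.den ∧ z.den = b.den + c.den := by
  rcases insertMediants_triple hx hy hz with
    ⟨j, a, b, ha, hb, rfl, rfl, rfl⟩ | ⟨j, a, b, c, ha, hb, hc, rfl, rfl, rfl⟩
  · exact .inl ⟨j, _, _, ha, hb, rfl, (mediant_num_den (fareyList_unimodular ha hb)).2, rfl⟩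
  · exact .inr ⟨j, _, _, _, ha, hb, hc, (mediant_num_den (fareyList_unimodular ha hb)).2, rfl,
      (mediant_num_den (fareyList_unimodular hb hc)).2⟩

theorem fareyList_den_le {n i : ℕ} {a b : ℚ} (ha : (fareyList n)[i]? = some a)
    (hb : (fareyList n)[i + 1]? = some b) :
    b.den ≤ (n + 1) * a.den ∧ a.den ≤ (n + 1) * b.den := by
  induction n generalizing i a b with
  | zero => obtain ⟨rfl, rfl⟩ := fareyList_zero_adjacent ha hb; simp
  | succ n ih =>
    obtain ⟨j, a', b', ha', hb', ⟨h, h'⟩ | ⟨h, h'⟩⟩ := fareyList_succ_adjacent_den ha hb <;>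
    · have := ih ha' hb'
      rw [h, h']
      constructor <;> nlinarith

/-- The shape of three consecutive denominators `x, y, z` of `F_n`: either `y` is the newest point,
the mediant of its neighbours, or it is older than both, and then `x = j * y + u`, `z = j * y + v`
with `u + v = y`, `j ≥ 1`, which puts `x` and `z` within a factor `2` of each other. -/
def FareyShape (x y z : ℕ) : Prop := y = x + z ∨ (y ≤ x ∧ y ≤ z ∧ x ≤ 2 * z ∧ z ≤ 2 * x)

theorem fareyList_fareyShape {n i : ℕ} {a b c : ℚ} (ha : (fareyList n)[i]? = some a)
    (hb : (fareyList n)[i + 1]? = some b) (hc : (fareyList n)[i + 2]? = some c) :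
    FareyShape a.den b.den c.den := by
  induction n generalizing i a b c with
  | zero => rcases i with _ | _ | i <;> simp [fareyList] at hc
  | succ n ih =>
    rcases fareyList_succ_triple_den ha hb hc with
      ⟨j, a', b', -, -, h₁, h₂, h₃⟩ | ⟨j, a', b', c', ha', hb', hc', h₁, h₂, h₃⟩
    · exact .inl (by omega)
    · have := ih ha' hb' hc'
      unfold FareyShape at this ⊢
      omega

section Windows

variable {N x₀ x₁ x₂ x₃ x₄ : ℕ}

theorem mul_comparable_of_fareyShape₁ (h₀₁ : x₁ ≤ N * x₀ ∧ x₀ ≤ N * x₁)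
    (h₁₂ : x₂ ≤ N * x₁ ∧ x₁ ≤ N * x₂) (s₀ : FareyShape x₀ x₁ x₂) :
    x₁ * x₂ ≤ N * (x₀ * x₁) ∧ x₀ * x₁ ≤ N * (x₁ * x₂) := by
  rcases s₀ with s₀ | s₀ <;> constructor <;> nlinarith

theorem mul_comparable_of_fareyShape₂ (h₀₁ : x₁ ≤ N * x₀ ∧ x₀ ≤ N * x₁)
    (h₁₂ : x₂ ≤ N * x₁ ∧ x₁ ≤ N * x₂) (h₂₃ : x₃ ≤ N * x₂ ∧ x₂ ≤ N * x₃)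
    (s₀ : FareyShape x₀ x₁ x₂) (s₁ : FareyShape x₁ x₂ x₃) :
    x₂ * x₃ ≤ 2 * N * (x₀ * x₁) ∧ x₀ * x₁ ≤ 2 * N * (x₂ * x₃) := by
  rcases s₀ with s₀ | s₀ <;> rcases s₁ with s₁ | s₁ <;> constructor <;> nlinarith

theorem mul_comparable_of_fareyShape₃ (h₀₁ : x₁ ≤ N * x₀ ∧ x₀ ≤ N * x₁)
    (h₁₂ : x₂ ≤ N * x₁ ∧ x₁ ≤ N * x₂) (h₂₃ : x₃ ≤ N * x₂ ∧ x₂ ≤ N * x₃)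
    (h₃₄ : x₄ ≤ N * x₃ ∧ x₃ ≤ N * x₄)
    (s₀ : FareyShape x₀ x₁ x₂) (s₁ : FareyShape x₁ x₂ x₃) (s₂ : FareyShape x₂ x₃ x₄) :
    x₃ * x₄ ≤ 4 * (N + 1) * (x₀ * x₁) ∧ x₀ * x₁ ≤ 4 * (N + 1) * (x₃ * x₄) := by
  rcases s₀ with s₀ | s₀ <;> rcases s₁ with s₁ | s₁ <;> rcases s₂ with s₂ | s₂ <;>
    constructor <;> nlinarith

end Windows

theorem fareyList_den_mul_den_comparable {n i k : ℕ} {a b c d : ℚ} (hk₁ : 1 ≤ k) (hk₃ : k ≤ 3)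
    (ha : (fareyList n)[i]? = some a) (hb : (fareyList n)[i + 1]? = some b)
    (hc : (fareyList n)[i + k]? = some c) (hd : (fareyList n)[i + k + 1]? = some d) :
    c.den * d.den ≤ 4 * (n + 2) * (a.den * b.den) ∧
      a.den * b.den ≤ 4 * (n + 2) * (c.den * d.den) := by
  have hab := fareyList_den_le ha hb
  have hcd := fareyList_den_le hc hd
  have weaken {C P Q : ℕ} (hC : C ≤ 4 * (n + 2)) (h : Q ≤ C * P ∧ P ≤ C * Q) :
      Q ≤ 4 * (n + 2) * P ∧ P ≤ 4 * (n + 2) * Q :=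
    ⟨h.1.trans (Nat.mul_le_mul_right _ hC), h.2.trans (Nat.mul_le_mul_right _ hC)⟩
  interval_cases k
  · obtain rfl : c = b := Option.some_injective _ (hc.symm.trans hb)
    exact weaken (by omega) (mul_comparable_of_fareyShape₁ hab hcd (fareyList_fareyShape ha hb hd))
  · exact weaken (by omega) (mul_comparable_of_fareyShape₂ hab (fareyList_den_le hb hc) hcd
      (fareyList_fareyShape ha hb hc) (fareyList_fareyShape hb hc hd))
  · have hx := List.getElem?_eq_getElem
      (show i + 2 < (fareyList n).length by have := (List.getElem?_eq_some_iff.1 hd).1; omega)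
    exact weaken (by omega) (mul_comparable_of_fareyShape₃ hab (fareyList_den_le hb hx)
      (fareyList_den_le hx hc) hcd (fareyList_fareyShape ha hb hx)
      (fareyList_fareyShape hb hx hc) (fareyList_fareyShape hx hc hd))

/-- There is an absolute constant `C ≥ 1` such that for all `n ≥ 1`, any two
complementary intervals `I = (a,b)` and `J = (c,d)` of `F_n` separated by at
most two adjacent complementary intervals of `F_n` satisfy
`1/(Cn) ≤ |I|/|J| ≤ Cn`. -/
theorem nearby_farey_intervals_comparable :
    ∃ C : ℝ, 1 ≤ C ∧ ∀ n : ℕ, 1 ≤ n → ∀ i k : ℕ, 1 ≤ k → k ≤ 3 →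
      ∀ a b c d : ℚ,
        (fareyList n)[i]? = some a →
        (fareyList n)[i + 1]? = some b →
        (fareyList n)[i + k]? = some c →
        (fareyList n)[i + k + 1]? = some d →
        1 / (C * n) ≤ ((b : ℝ) - a) / ((d : ℝ) - c) ∧
          ((b : ℝ) - a) / ((d : ℝ) - c) ≤ C * n := by
  refine ⟨12, by norm_num, fun n hn i k hk₁ hk₃ a b c d ha hb hc hd => ?_⟩
  obtain ⟨hcd, hab⟩ := fareyList_den_mul_den_comparable hk₁ hk₃ ha hb hc hd
  have hC : 4 * (n + 2) ≤ 12 * n := by omega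
  have hcd' : (c.den * d.den : ℝ) ≤ 12 * n * (a.den * b.den) := by
    exact_mod_cast hcd.trans (Nat.mul_le_mul_right _ hC)
  have hab' : (a.den * b.den : ℝ) ≤ 12 * n * (c.den * d.den) := by
    exact_mod_cast hab.trans (Nat.mul_le_mul_right _ hC)
  have hn' : (0 : ℝ) < n := by exact_mod_cast hn
  rw [sub_eq_one_div_den_mul_den (fareyList_unimodular ha hb),
    sub_eq_one_div_den_mul_den (fareyList_unimodular hc hd),
    div_div_div_cancel_left' _ _ one_ne_zero]
  constructor
  · rw [div_le_div_iff₀ (by positivity) (by positivity)]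
    linarith
  · rw [div_le_iff₀ (by positivity)]
    linarith
end

section
/- Let σ be the Schwarz reflection of a simply connected quadrature domain D with Riemann uniformization R : ℂ̂ \ 𝔻̄ → D extending to a rational map of degree d on ℂ̂. Then σ := R ∘ η ∘ (R|_{ℂ̂\𝔻̄})⁻¹, where η(z) = 1/conj(z), satisfies σ = id on ∂D and the diagram σ ∘ R = R ∘ η holds on ℂ̂ \ 𝔻; consequently σ : σ⁻¹(D) → D is a degree d-1 branched covering and σ : σ⁻¹(int(Dᶜ)) → int(Dᶜ) is a degree d branched covering. -/
/-!
Off a finite set of values `w`, the equation `R u = w` is `P u - w Q u = 0`, a separable polynomial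
equation of degree `d` (a double root would be a zero of the Wronskian of `P` and `Q`), so it has
exactly `d` solutions, none on the unit circle when `w ∉ ∂D`. A point `R v ∈ D` with `|v| > 1` is
sent to `w` by `σ` iff `1 / conj v` is one of the solutions inside the disk, while `σ` fixes `∂D`;
so the `σ`-fibre over `w` is in bijection with the solutions inside the disk. Since `R` is
univalent outside the disk, exactly one solution lies outside when `w ∈ D` and none when
`w ∉ closure D`, giving `d - 1` and `d`.
-/

open Polynomial ComplexConjugate Filter

namespace Complex

theorem norm_one_div_conj (z : ℂ) : ‖1 / conj z‖ = ‖z‖⁻¹ := by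
  simp

theorem one_div_conj_one_div_conj (z : ℂ) : 1 / conj (1 / conj z) = z := by
  simp

theorem one_div_conj_of_norm_eq_one {z : ℂ} (hz : ‖z‖ = 1) : 1 / conj z = z := by
  rw [one_div, ← Complex.inv_eq_conj hz, inv_inv]

theorem one_lt_norm_one_div_conj {z : ℂ} (hz0 : z ≠ 0) (hz1 : ‖z‖ < 1) : 1 < ‖1 / conj z‖ := by
  rw [norm_one_div_conj]
  exact (one_lt_inv₀ (norm_pos_iff.mpr hz0)).mpr hz1

end Complex

namespace Polynomial

variable {P Q : ℂ[X]} {w u : ℂ}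

theorem eval_ne_zero_of_isCoprime_of_isRoot_sub_C_mul (hPQ : IsCoprime P Q)
    (hu : (P - C w * Q).IsRoot u) : Q.eval u ≠ 0 := by
  intro hQ
  have hP : P.eval u = 0 := by simpa [hQ] using hu
  simpa [hP, hQ] using (isCoprime_iff_aeval_ne_zero_of_isAlgClosed ℂ ℂ P Q).mp hPQ u

theorem isRoot_sub_C_mul_iff (hQ : Q.eval u ≠ 0) :
    (P - C w * Q).IsRoot u ↔ P.eval u / Q.eval u = w := by
  rw [div_eq_iff hQ, IsRoot, eval_sub, eval_mul, eval_C, sub_eq_zero]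

theorem wronskian_ne_zero_of_isCoprime (hPQ : IsCoprime P Q)
    (hd : 0 < max P.natDegree Q.natDegree) : wronskian P Q ≠ 0 := by
  rw [Ne, hPQ.wronskian_eq_zero_iff, derivative_eq_zero, derivative_eq_zero]
  omega

theorem isRoot_wronskian_of_isRoot_sub_C_mul (hu : (P - C w * Q).IsRoot u)
    (hu' : (derivative (P - C w * Q)).IsRoot u) : (wronskian P Q).IsRoot u := by
  simp only [IsRoot, eval_sub, eval_mul, eval_C, derivative_sub, derivative_mul, derivative_C,
    zero_mul, zero_add, sub_eq_zero] at hu hu'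
  simp only [IsRoot, wronskian, eval_sub, eval_mul, hu, hu']
  ring

theorem natDegree_sub_C_mul {d : ℕ} (hd : d = max P.natDegree Q.natDegree)
    (hw : P.coeff d - w * Q.coeff d ≠ 0) : (P - C w * Q).natDegree = d := by
  refine le_antisymm ?_ (le_natDegree_of_ne_zero (by simpa using hw))
  refine (natDegree_sub_le _ _).trans (max_le ?_ ((natDegree_C_mul_le _ _).trans ?_)) <;> omega

theorem coeff_ne_zero_or_coeff_ne_zero {d : ℕ} (hd : d = max P.natDegree Q.natDegree)
    (hPQ : ¬(P = 0 ∧ Q = 0)) : P.coeff d ≠ 0 ∨ Q.coeff d ≠ 0 := by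
  by_contra! h
  have hP : P.natDegree = d → P = 0 := fun hPd =>
    leadingCoeff_eq_zero.mp (by rw [leadingCoeff, hPd, h.1])
  have hQ : Q.natDegree = d → Q = 0 := fun hQd =>
    leadingCoeff_eq_zero.mp (by rw [leadingCoeff, hQd, h.2])
  rcases max_choice P.natDegree Q.natDegree with hmax | hmax
  · obtain rfl := hP (by omega)
    simp only [natDegree_zero, zero_le, sup_of_le_right] at hd
    exact hPQ ⟨rfl, hQ hd.symm⟩
  · obtain rfl := hQ (by omega)
    simp only [natDegree_zero, zero_le, sup_of_le_left] at hd
    exact hPQ ⟨hP hd.symm, rfl⟩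

theorem coeff_sub_mul_coeff_ne_zero {d : ℕ} (hd : d = max P.natDegree Q.natDegree)
    (hPQ : ¬(P = 0 ∧ Q = 0)) (hw : w ≠ P.coeff d / Q.coeff d) :
    P.coeff d - w * Q.coeff d ≠ 0 := by
  intro h
  by_cases hQd : Q.coeff d = 0
  · exact (coeff_ne_zero_or_coeff_ne_zero hd hPQ).elim (· (by simpa [hQd] using h)) (· hQd)
  · exact hw (by rw [eq_div_iff hQd]; linear_combination -h)

theorem ncard_setOf_isRoot_of_separable {p : ℂ[X]} (hp : p.Separable) :
    {u | p.IsRoot u}.ncard = p.natDegree := by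
  classical
  have hp0 : p ≠ 0 := hp.ne_zero
  have : {u | p.IsRoot u} = ↑p.roots.toFinset := by
    ext u; simp [hp0]
  rw [this, Set.ncard_coe_finset, Multiset.toFinset_card_of_nodup (nodup_roots hp),
    IsAlgClosed.card_roots_eq_natDegree]

theorem separable_of_forall_isRoot_not_isRoot_derivative {p : ℂ[X]}
    (h : ∀ u, p.IsRoot u → ¬(derivative p).IsRoot u) : p.Separable := by
  rw [separable_def, isCoprime_iff_aeval_ne_zero_of_isAlgClosed ℂ ℂ]
  intro u
  simp only [coe_aeval_eq_eval]
  by_cases hu : p.IsRoot u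
  · exact Or.inr (h u hu)
  · exact Or.inl hu

end Polynomial

theorem preimage_eq_setOf_isRoot_sub_C_mul {P Q : ℂ[X]} {R : ℂ → ℂ} (hPQ : IsCoprime P Q)
    (hR : ∀ z, Q.eval z ≠ 0 → R z = P.eval z / Q.eval z) {w : ℂ}
    (hw : w ∉ R '' {u | Q.IsRoot u}) : R ⁻¹' {w} = {u | (P - C w * Q).IsRoot u} := by
  ext u
  constructor
  · intro hu
    have hQu : Q.eval u ≠ 0 := fun hQu => hw ⟨u, hQu, hu⟩
    rw [Set.mem_ofPred_eq, isRoot_sub_C_mul_iff hQu, ← hR u hQu]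
    exact hu
  · intro hu
    have hQu := eval_ne_zero_of_isCoprime_of_isRoot_sub_C_mul hPQ hu
    rw [Set.mem_preimage, Set.mem_singleton_iff, hR u hQu]
    exact (isRoot_sub_C_mul_iff hQu).mp hu

/-- The excluded values are the critical values, the value at `∞`, and the junk values `R` takes
at the poles of `P / Q`. -/
theorem eventually_ncard_preimage_eq_of_eq_div {P Q : ℂ[X]} {R : ℂ → ℂ} (hPQ : IsCoprime P Q)
    (hd : 0 < max P.natDegree Q.natDegree)
    (hR : ∀ z, Q.eval z ≠ 0 → R z = P.eval z / Q.eval z) :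
    ∀ᶠ w in cofinite, (R ⁻¹' {w}).ncard = max P.natDegree Q.natDegree := by
  set d := max P.natDegree Q.natDegree with hd_def
  have hQ : Q ≠ 0 := by
    rintro rfl
    have := natDegree_eq_zero_of_isUnit (isCoprime_zero_right.mp hPQ)
    rw [natDegree_zero] at hd_def
    omega
  have hcrit := (finite_setOfPred_isRoot (wronskian_ne_zero_of_isCoprime hPQ hd)).image R
  have hpoles := (finite_setOfPred_isRoot hQ).image R
  filter_upwards [eventually_cofinite_ne (P.coeff d / Q.coeff d), hcrit.eventually_cofinite_notMem,
    hpoles.eventually_cofinite_notMem] with w hw_inf hw_crit hw_poles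
  have hfiber := preimage_eq_setOf_isRoot_sub_C_mul hPQ hR hw_poles
  have hsep : (P - C w * Q).Separable := by
    refine separable_of_forall_isRoot_not_isRoot_derivative fun u hu hu' => hw_crit ?_
    exact ⟨u, isRoot_wronskian_of_isRoot_sub_C_mul hu hu', (hfiber.symm ▸ hu : u ∈ R ⁻¹' {w})⟩
  have hPQ0 : ¬(P = 0 ∧ Q = 0) := fun h => hQ h.2
  rw [hfiber, ncard_setOf_isRoot_of_separable hsep,
    natDegree_sub_C_mul hd_def (coeff_sub_mul_coeff_ne_zero hd_def hPQ0 hw_inf)]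

theorem Set.BijOn.ncard_inter_preimage_singleton_of_mem {α β : Type*} {f : α → β} {s : Set α}
    {t : Set β} (h : Set.BijOn f s t) {w : β} (hw : w ∈ t) : (s ∩ f ⁻¹' {w}).ncard = 1 := by
  obtain ⟨x, hx, rfl⟩ := h.surjOn hw
  refine Set.ncard_eq_one.mpr ⟨x, Set.eq_singleton_iff_unique_mem.mpr ⟨⟨hx, rfl⟩, ?_⟩⟩
  exact fun y ⟨hy, hyx⟩ => h.injOn hy hx hyx

theorem Set.BijOn.inter_preimage_singleton_of_notMem {α β : Type*} {f : α → β} {s : Set α}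
    {t : Set β} (h : Set.BijOn f s t) {w : β} (hw : w ∉ t) : s ∩ f ⁻¹' {w} = ∅ :=
  Set.eq_empty_of_forall_notMem fun _ ⟨hx, hxw⟩ => hw (hxw ▸ h.mapsTo hx)

section SchwarzReflection

variable {D : Set ℂ} {R σ : ℂ → ℂ}

theorem schwarz_eq_self_of_mem_frontier (hbd : frontier D = R '' {z | ‖z‖ = 1})
    (hσ : ∀ z : ℂ, 1 ≤ ‖z‖ → σ (R z) = R (1 / conj z)) {w : ℂ} (hw : w ∈ frontier D) :
    σ w = w := by
  rw [hbd] at hw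
  obtain ⟨z, hz, rfl⟩ := hw
  rw [hσ z hz.ge, Complex.one_div_conj_of_norm_eq_one hz]

/-- The hypothesis `R 0 ≠ w` keeps `u = 0` out of the image: `1 / conj 0 = 0` is a junk value. -/
theorem setOf_mem_closure_schwarz_eq (hRbij : Set.BijOn R {z | 1 < ‖z‖} D)
    (hbd : frontier D = R '' {z | ‖z‖ = 1}) (hσ : ∀ z : ℂ, 1 ≤ ‖z‖ → σ (R z) = R (1 / conj z))
    {w : ℂ} (hw : w ∉ frontier D) (hw0 : R 0 ≠ w) :
    {z | z ∈ closure D ∧ σ z = w} =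
      (fun u => R (1 / conj u)) '' ({u | ‖u‖ < 1} ∩ R ⁻¹' {w}) := by
  ext z
  constructor
  · rintro ⟨hz, rfl⟩
    rcases (closure_eq_self_union_frontier D ▸ hz : z ∈ D ∪ frontier D) with hzD | hzF
    · obtain ⟨v, hv, rfl⟩ := hRbij.surjOn hzD
      refine ⟨1 / conj v, ⟨?_, (hσ v hv.le).symm⟩, ?_⟩
      · rw [Set.mem_ofPred_eq, Complex.norm_one_div_conj]
        exact inv_lt_one_of_one_lt₀ hv
      · simp only [Complex.one_div_conj_one_div_conj v]
    · rw [schwarz_eq_self_of_mem_frontier hbd hσ hzF] at hw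
      exact absurd hzF hw
  · rintro ⟨u, ⟨hu1, rfl⟩, rfl⟩
    have hu0 : u ≠ 0 := by rintro rfl; exact hw0 rfl
    have hv := Complex.one_lt_norm_one_div_conj hu0 hu1
    refine ⟨subset_closure (hRbij.mapsTo hv), ?_⟩
    rw [hσ _ hv.le, Complex.one_div_conj_one_div_conj u]

theorem ncard_schwarz_fiber_add_ncard (hRbij : Set.BijOn R {z | 1 < ‖z‖} D)
    (hbd : frontier D = R '' {z | ‖z‖ = 1}) (hσ : ∀ z : ℂ, 1 ≤ ‖z‖ → σ (R z) = R (1 / conj z))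
    {w : ℂ} (hw : w ∉ frontier D) (hw0 : R 0 ≠ w) (hfin : (R ⁻¹' {w}).Finite) :
    {z | z ∈ closure D ∧ σ z = w}.ncard + ({z | 1 < ‖z‖} ∩ R ⁻¹' {w}).ncard =
      (R ⁻¹' {w}).ncard := by
  have hinj : Set.InjOn (fun u => R (1 / conj u)) ({u | ‖u‖ < 1} ∩ R ⁻¹' {w}) := by
    refine hRbij.injOn.comp (Function.Involutive.injective
      (f := fun z : ℂ => 1 / conj z) Complex.one_div_conj_one_div_conj).injOn fun u ⟨hu1, hu⟩ => ?_
    refine Complex.one_lt_norm_one_div_conj ?_ hu1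
    rintro rfl
    exact hw0 hu
  have hunion : {u | ‖u‖ < 1} ∩ R ⁻¹' {w} ∪ {z | 1 < ‖z‖} ∩ R ⁻¹' {w} = R ⁻¹' {w} := by
    rw [← Set.union_inter_distrib_right, Set.inter_eq_right]
    intro u hu
    rcases lt_trichotomy ‖u‖ 1 with h | h | h
    · exact Or.inl h
    · exact absurd (hbd ▸ ⟨u, h, hu⟩) hw
    · exact Or.inr h
  have hdisj : Disjoint ({u | ‖u‖ < 1} ∩ R ⁻¹' {w}) ({z | 1 < ‖z‖} ∩ R ⁻¹' {w}) :=
    Set.disjoint_left.mpr fun _ ⟨h1, _⟩ ⟨h2, _⟩ => lt_asymm h1 (Set.mem_ofPred.mp h2)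
  rw [setOf_mem_closure_schwarz_eq hRbij hbd hσ hw hw0, hinj.ncard_image,
    ← Set.ncard_union_eq hdisj (hfin.subset Set.inter_subset_right)
      (hfin.subset Set.inter_subset_right), hunion]

end SchwarzReflection

theorem schwarz_reflection_of_quadrature_domain_general
    (D : Set ℂ) (hD : IsOpen D)
    (P Q : Polynomial ℂ) (hcop : IsCoprime P Q)
    (d : ℕ) (hd : d = max P.natDegree Q.natDegree) (hd2 : 2 ≤ d)
    (R : ℂ → ℂ) (hR : ∀ z : ℂ, Q.eval z ≠ 0 → R z = P.eval z / Q.eval z)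
    (hRbij : Set.BijOn R {z : ℂ | 1 < ‖z‖} D)
    (hbd : frontier D = R '' {z : ℂ | ‖z‖ = 1})
    (η : ℂ → ℂ) (hη : ∀ z : ℂ, η z = 1 / (starRingEnd ℂ z))
    (σ : ℂ → ℂ)
    (hσ : ∀ z : ℂ, 1 ≤ ‖z‖ → σ (R z) = R (η z)) :
    (∀ w ∈ frontier D, σ w = w) ∧
    (∀ z : ℂ, 1 ≤ ‖z‖ → σ (R z) = R (η z)) ∧
    (∃ S : Set ℂ, S.Finite ∧
      (∀ w ∈ D \ S,
        {z : ℂ | z ∈ closure D ∧ σ z = w}.ncard = d - 1) ∧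
      (∀ w ∈ interior Dᶜ \ S,
        {z : ℂ | z ∈ closure D ∧ σ z = w}.ncard = d)) := by
  obtain rfl : η = fun z => 1 / conj z := funext hη
  refine ⟨fun w => schwarz_eq_self_of_mem_frontier hbd hσ, hσ, ?_⟩
  have hregular := (eventually_ncard_preimage_eq_of_eq_div hcop (by omega) hR).and
    (eventually_cofinite_ne (R 0))
  refine ⟨_, eventually_cofinite.mp hregular, ?_, ?_⟩
  · rintro w ⟨hwD, hwS⟩
    obtain ⟨hwd, hw0⟩ := not_not.mp hwS
    have := ncard_schwarz_fiber_add_ncard hRbij hbd hσ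
      (fun hwF => (hD.frontier_eq ▸ hwF : w ∈ closure D \ D).2 hwD) hw0.symm
      (Set.finite_of_ncard_pos (by omega))
    rw [hwd, hRbij.ncard_inter_preimage_singleton_of_mem hwD, ← hd] at this
    omega
  · rintro w ⟨hwD, hwS⟩
    obtain ⟨hwd, hw0⟩ := not_not.mp hwS
    rw [interior_compl] at hwD
    have := ncard_schwarz_fiber_add_ncard hRbij hbd hσ
      (fun hwF => hwD (frontier_subset_closure hwF)) hw0.symm (Set.finite_of_ncard_pos (by omega))
    rw [hwd, hRbij.inter_preimage_singleton_of_notMem (fun h => hwD (subset_closure h)),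
      Set.ncard_empty, ← hd] at this
    omega

/-- Schwarz reflection of a simply connected quadrature domain. Let `D ⊆ ℂ` be
open, and let `R = P/Q` be a rational map of degree `d` whose restriction to
the exterior of the closed unit disk is a conformal bijection onto `D`, with
`∂D = R({|z| = 1})`. Let `η(z) = 1/conj(z)` be reflection in the unit circle,
and let `σ` satisfy the Schwarz-reflection relation `σ ∘ R = R ∘ η` on
`{|z| ≥ 1}`. Then `σ` fixes `∂D` pointwise, and away from finitely many
(critical) values, `σ : σ⁻¹(D) → D` has fibers of cardinality `d - 1` while
`σ : σ⁻¹(int Dᶜ) → int Dᶜ` has fibers of cardinality `d` (branched coverings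
of degree `d-1` and `d` respectively). -/
theorem schwarz_reflection_of_quadrature_domain
    (D : Set ℂ) (hD : IsOpen D) (hDne : D.Nonempty)
    (P Q : Polynomial ℂ) (hcop : IsCoprime P Q)
    (d : ℕ) (hd : d = max P.natDegree Q.natDegree) (hd2 : 2 ≤ d)
    (R : ℂ → ℂ) (hR : ∀ z : ℂ, Q.eval z ≠ 0 → R z = P.eval z / Q.eval z)
    (hRanal : ∀ z : ℂ, 1 < ‖z‖ → DifferentiableAt ℂ R z)
    (hRbij : Set.BijOn R {z : ℂ | 1 < ‖z‖} D)
    (hbd : frontier D = R '' {z : ℂ | ‖z‖ = 1})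
    (η : ℂ → ℂ) (hη : ∀ z : ℂ, η z = 1 / (starRingEnd ℂ z))
    (σ : ℂ → ℂ)
    (hσ : ∀ z : ℂ, 1 ≤ ‖z‖ → σ (R z) = R (η z)) :
    (∀ w ∈ frontier D, σ w = w) ∧
    (∀ z : ℂ, 1 ≤ ‖z‖ → σ (R z) = R (η z)) ∧
    (∃ S : Set ℂ, S.Finite ∧
      (∀ w ∈ D \ S,
        {z : ℂ | z ∈ closure D ∧ σ z = w}.ncard = d - 1) ∧
      (∀ w ∈ interior Dᶜ \ S,
        {z : ℂ | z ∈ closure D ∧ σ z = w}.ncard = d)) :=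
  schwarz_reflection_of_quadrature_domain_general D hD P Q hcop d hd hd2 R hR hRbij hbd η hη σ hσ
end
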